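/- arXiv:2307.01525 — 2 statements merged into one kernel-verified Lean document; each statement's English description precedes it below -/
import Mathlib

section
/- Let (Ω, μ) be a probability space, n a positive integer, Ĥ a deterministic n×n complex matrix and F a nonzero deterministic n×n complex matrix. Let x : Ω → ℂⁿ, n̄ : Ω → ℂⁿ be random vectors and E : Ω → Mat_{n×n}(ℂ) a random matrix, all with square-integrable entries, such that: (i) 𝔼[x·x^H] = I, (ii) 𝔼[E] = 0 entrywise and 𝔼[E^H·E] = P·σ_e²·I for a positive integer P and real σ_e² ≥ 0, (iii) 𝔼[n̄·n̄^H] = σ_n²·I for real σ_n² ≥ 0, (iv) x, E and n̄ are mutually independent and 𝔼[x] = 0, 𝔼[n̄] = 0. Let γ = √(n / tr(F·F^H)) be the power normalization factor (taking total transmit power equal to n). Then 𝔼[‖((Ĥ + E)·F − I)·x + γ⁻¹·n̄‖²] = ‖Ĥ·F − I‖_F² + (σ_n² + P·σ_e²)·‖F‖_F². -/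
open Matrix MeasureTheory ProbabilityTheory

/-- Squared Frobenius norm of a complex matrix. -/
def frobSq {n : ℕ} (A : Matrix (Fin n) (Fin n) ℂ) : ℝ :=
  ∑ i, ∑ j, Complex.normSq (A i j)

/-- Squared Euclidean norm of a complex vector. -/
def vecNormSq {n : ℕ} (v : Fin n → ℂ) : ℝ :=
  ∑ i, Complex.normSq (v i)

section Helpers

variable {Ω : Type*} {mΩ : MeasurableSpace Ω} {μ : MeasureTheory.Measure Ω}

lemma memLp_conj {f : Ω → ℂ} {p : ENNReal} (hf : MemLp f p μ) :
    MemLp (fun ω => (starRingEnd ℂ) (f ω)) p μ := by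
  refine ⟨Complex.continuous_conj.comp_aestronglyMeasurable hf.1, ?_⟩
  have h : eLpNorm (fun ω => (starRingEnd ℂ) (f ω)) p μ = eLpNorm f p μ :=
    eLpNorm_congr_norm_ae (Filter.Eventually.of_forall fun ω => by simp)
  exact h ▸ hf.2

lemma integrable_mul_L2 {f g : Ω → ℂ} (hf : MemLp f 2 μ) (hg : MemLp g 2 μ) :
    Integrable (fun ω => f ω * g ω) μ := by
  have h := hg.smul (r := 1) hf
  rw [← memLp_one_iff_integrable]
  exact h

lemma integrable_conj' {f : Ω → ℂ} (hf : Integrable f μ) :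
    Integrable (fun ω => (starRingEnd ℂ) (f ω)) μ := by
  rw [← memLp_one_iff_integrable] at hf ⊢
  exact memLp_conj hf

lemma meas_comap {α : Type*} {mα : MeasurableSpace α} (f : Ω → α) :
    Measurable[mα.comap f] f := fun s hs => ⟨s, hs, rfl⟩

lemma indepFun_of_measurable {A B : MeasurableSpace Ω} {β γ : Type*}
    [MeasurableSpace β] [MeasurableSpace γ] {f : Ω → β} {g : Ω → γ}
    (hAB : ProbabilityTheory.Indep A B μ) (hf : Measurable[A] f) (hg : Measurable[B] g) :
    IndepFun f g μ :=
  ProbabilityTheory.indep_of_indep_of_le_right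
    (ProbabilityTheory.indep_of_indep_of_le_left hAB (measurable_iff_comap_le.mp hf))
    (measurable_iff_comap_le.mp hg)

lemma integral_complex_re {f : Ω → ℂ} (hf : Integrable f μ) :
    ∫ ω, (f ω).re ∂μ = (∫ ω, f ω ∂μ).re := by
  simpa [RCLike.re_to_complex] using integral_re hf

lemma integral_conj'' {f : Ω → ℂ} :
    ∫ ω, (starRingEnd ℂ) (f ω) ∂μ = (starRingEnd ℂ) (∫ ω, f ω ∂μ) := integral_conj

lemma ProbabilityTheory.IndepFun.integral_mul_complex {f g : Ω → ℂ} (h : IndepFun f g μ)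
    (hf : Integrable f μ) (hg : Integrable g μ) :
    ∫ ω, f ω * g ω ∂μ = (∫ ω, f ω ∂μ) * ∫ ω, g ω ∂μ := by
  have hfg : Integrable (fun ω => f ω * g ω) μ := h.integrable_mul hf hg
  have hfr : Integrable (fun ω => (f ω).re) μ := hf.re
  have hfi : Integrable (fun ω => (f ω).im) μ := hf.im
  have hgr : Integrable (fun ω => (g ω).re) μ := hg.re
  have hgi : Integrable (fun ω => (g ω).im) μ := hg.im
  have hrr : IndepFun (fun ω => (f ω).re) (fun ω => (g ω).re) μ :=
    h.comp Complex.measurable_re Complex.measurable_re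
  have hri : IndepFun (fun ω => (f ω).re) (fun ω => (g ω).im) μ :=
    h.comp Complex.measurable_re Complex.measurable_im
  have hir : IndepFun (fun ω => (f ω).im) (fun ω => (g ω).re) μ :=
    h.comp Complex.measurable_im Complex.measurable_re
  have hii : IndepFun (fun ω => (f ω).im) (fun ω => (g ω).im) μ :=
    h.comp Complex.measurable_im Complex.measurable_im
  have irr : Integrable (fun ω => (f ω).re * (g ω).re) μ := hrr.integrable_mul hfr hgr
  have iri : Integrable (fun ω => (f ω).re * (g ω).im) μ := hri.integrable_mul hfr hgi
  have iir : Integrable (fun ω => (f ω).im * (g ω).re) μ := hir.integrable_mul hfi hgr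
  have iii : Integrable (fun ω => (f ω).im * (g ω).im) μ := hii.integrable_mul hfi hgi
  have err : ∫ ω, (f ω).re * (g ω).re ∂μ = (∫ ω, (f ω).re ∂μ) * ∫ ω, (g ω).re ∂μ :=
    hrr.integral_fun_mul_eq_mul_integral hfr.1 hgr.1
  have eri : ∫ ω, (f ω).re * (g ω).im ∂μ = (∫ ω, (f ω).re ∂μ) * ∫ ω, (g ω).im ∂μ :=
    hri.integral_fun_mul_eq_mul_integral hfr.1 hgi.1
  have eir : ∫ ω, (f ω).im * (g ω).re ∂μ = (∫ ω, (f ω).im ∂μ) * ∫ ω, (g ω).re ∂μ :=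
    hir.integral_fun_mul_eq_mul_integral hfi.1 hgr.1
  have eii : ∫ ω, (f ω).im * (g ω).im ∂μ = (∫ ω, (f ω).im ∂μ) * ∫ ω, (g ω).im ∂μ :=
    hii.integral_fun_mul_eq_mul_integral hfi.1 hgi.1
  have int_re : ∀ {h : Ω → ℂ}, Integrable h μ → (∫ ω, h ω ∂μ).re = ∫ ω, (h ω).re ∂μ :=
    fun hh => by simpa [RCLike.re_to_complex] using (integral_re hh).symm
  have int_im : ∀ {h : Ω → ℂ}, Integrable h μ → (∫ ω, h ω ∂μ).im = ∫ ω, (h ω).im ∂μ :=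
    fun hh => by simpa [RCLike.im_to_complex] using (integral_im hh).symm
  apply Complex.ext
  · rw [int_re hfg]
    simp only [Complex.mul_re]
    rw [integral_sub irr iii, err, eii, int_re hf, int_re hg, int_im hf, int_im hg]
  · rw [int_im hfg]
    simp only [Complex.mul_im]
    rw [integral_add iri iir, eri, eir, int_re hf, int_re hg, int_im hf, int_im hg]

lemma iIndep_congr_sets {ι : Type*} {m m' : ι → MeasurableSpace Ω}
    (h : ∀ i s, MeasurableSet[m' i] s → ∃ t, MeasurableSet[m i] t ∧ s =ᵐ[μ] t)
    (hf : iIndep m μ) : iIndep m' μ := by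
  rw [iIndep_iff] at hf ⊢
  intro S s hs
  have h' : ∀ i ∈ S, ∃ t, MeasurableSet[m i] t ∧ s i =ᵐ[μ] t := fun i hi => h i (s i) (hs i hi)
  choose! t ht1 ht2 using h'
  have hiInter : (⋂ i ∈ S, s i) =ᵐ[μ] ⋂ i ∈ S, t i := by
    rw [Filter.eventuallyEq_set]
    have hall : ∀ᵐ ω ∂μ, ∀ i ∈ S, (ω ∈ s i ↔ ω ∈ t i) :=
      (Filter.eventually_all_finset S).mpr fun i hi => Filter.eventuallyEq_set.mp (ht2 i hi)
    filter_upwards [hall] with ω hω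
    simp only [Set.mem_iInter]
    exact forall₂_congr hω
  rw [measure_congr hiInter, hf S (fun i hi => ht1 i hi)]
  exact (Finset.prod_congr rfl fun i hi => (measure_congr (ht2 i hi)).symm)

end Helpers

theorem mse_core
    {Ω : Type*} [mΩ0 : MeasurableSpace Ω] (μ : MeasureTheory.Measure Ω) [IsProbabilityMeasure μ]
    (n : ℕ) (hn : 0 < n)
    (Hhat F : Matrix (Fin n) (Fin n) ℂ) (hF : F ≠ 0)
    (x nbar : Ω → Fin n → ℂ) (E : Ω → Matrix (Fin n) (Fin n) ℂ)
    (hxm : Measurable x) (hnm : Measurable nbar)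
    (hEm : Measurable (fun ω => (fun i j => E ω i j)))
    (hxL2 : ∀ i, MemLp (fun ω => x ω i) 2 μ)
    (hnL2 : ∀ i, MemLp (fun ω => nbar ω i) 2 μ)
    (hEL2 : ∀ i j, MemLp (fun ω => E ω i j) 2 μ)
    (P : ℕ) (σe2 σn2 : ℝ)
    (hxx : ∀ i j, ∫ ω, x ω i * (starRingEnd ℂ) (x ω j) ∂μ =
      (1 : Matrix (Fin n) (Fin n) ℂ) i j)
    (hE0 : ∀ i j, ∫ ω, E ω i j ∂μ = 0)
    (hEE : ∀ i j, ∫ ω, ((E ω)ᴴ * E ω) i j ∂μ =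
      (((P : ℝ) * σe2 : ℝ) : ℂ) • (1 : Matrix (Fin n) (Fin n) ℂ) i j)
    (hnn : ∀ i j, ∫ ω, nbar ω i * (starRingEnd ℂ) (nbar ω j) ∂μ =
      ((σn2 : ℂ)) • (1 : Matrix (Fin n) (Fin n) ℂ) i j)
    (hx0 : ∀ i, ∫ ω, x ω i ∂μ = 0)
    (hn0 : ∀ i, ∫ ω, nbar ω i ∂μ = 0)
    (hindep : iIndep
      ![MeasurableSpace.comap x inferInstance,
        MeasurableSpace.comap (fun ω => fun i j => E ω i j) inferInstance,
        MeasurableSpace.comap nbar inferInstance] μ)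
    (γ : ℝ) (hγ : γ = Real.sqrt ((n : ℝ) / (Matrix.trace (F * Fᴴ)).re)) :
    ∫ ω, vecNormSq (((Hhat + E ω) * F - 1).mulVec (x ω) + γ⁻¹ • nbar ω) ∂μ =
      frobSq (Hhat * F - 1) + (σn2 + (P : ℝ) * σe2) * frobSq F := by
  classical
  obtain ⟨B, hBdef⟩ : ∃ B, B = Hhat * F - 1 := ⟨_, rfl⟩
  obtain ⟨M, hMdef⟩ : ∃ M : Ω → Matrix (Fin n) (Fin n) ℂ, M = fun ω => B + E ω * F := ⟨_, rfl⟩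
  have hMapply : ∀ ω (i j : Fin n), M ω i j = B i j + ∑ k, E ω i k * F k j := by
    intro ω i j
    rw [hMdef]
    simp [Matrix.add_apply, Matrix.mul_apply]
  obtain ⟨mX, hmX⟩ : ∃ m, m = MeasurableSpace.comap x
    (inferInstance : MeasurableSpace (Fin n → ℂ)) := ⟨_, rfl⟩
  obtain ⟨mE, hmE⟩ : ∃ m, m = MeasurableSpace.comap (fun ω => (fun i j => E ω i j))
    (inferInstance : MeasurableSpace (Fin n → Fin n → ℂ)) := ⟨_, rfl⟩
  obtain ⟨mN, hmN⟩ : ∃ m, m = MeasurableSpace.comap nbar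
    (inferInstance : MeasurableSpace (Fin n → ℂ)) := ⟨_, rfl⟩
  rw [← hmX, ← hmE, ← hmN] at hindep
  have hleX : mX ≤ mΩ0 := by rw [hmX]; exact measurable_iff_comap_le.mp hxm
  have hleE : mE ≤ mΩ0 := by rw [hmE]; exact measurable_iff_comap_le.mp hEm
  have hleN : mN ≤ mΩ0 := by rw [hmN]; exact measurable_iff_comap_le.mp hnm
  have hle : ∀ i : Fin 3, ![mX, mE, mN] i ≤ mΩ0 := by
    intro i
    fin_cases i
    · exact hleX
    · exact hleE
    · exact hleN
  have IEX : ProbabilityTheory.Indep mE mX μ := by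
    simpa using hindep.indep (show (1 : Fin 3) ≠ 0 by decide)
  have IXN : ProbabilityTheory.Indep mX mN μ := by
    simpa using hindep.indep (show (0 : Fin 3) ≠ 2 by decide)
  have IE_XN : ProbabilityTheory.Indep mE (mX ⊔ mN) μ := by
    have h := ProbabilityTheory.indep_biSup_compl hle hindep {1}
    have h1 : (⨆ i ∈ ({1} : Set (Fin 3)), ![mX, mE, mN] i) = mE := by simp
    rw [h1] at h
    refine ProbabilityTheory.indep_of_indep_of_le_right h (sup_le ?_ ?_)
    · have h0 : (0 : Fin 3) ∈ ({1}ᶜ : Set (Fin 3)) := by decide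
      simpa using le_biSup (f := fun i : Fin 3 => ![mX, mE, mN] i) h0
    · have h2 : (2 : Fin 3) ∈ ({1}ᶜ : Set (Fin 3)) := by decide
      simpa using le_biSup (f := fun i : Fin 3 => ![mX, mE, mN] i) h2
  -- measurability with respect to the comap σ-algebras
  have mxj : ∀ j, Measurable[mX] fun ω => x ω j := fun j =>
    (measurable_pi_apply j).comp (by rw [hmX]; exact meas_comap x)
  have mnj : ∀ j, Measurable[mN] fun ω => nbar ω j := fun j =>
    (measurable_pi_apply j).comp (by rw [hmN]; exact meas_comap nbar)
  have mnjc : ∀ j, Measurable[mN] fun ω => (starRingEnd ℂ) (nbar ω j) := fun j =>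
    Complex.continuous_conj.measurable.comp (mnj j)
  have mxjc : ∀ j, Measurable[mX] fun ω => (starRingEnd ℂ) (x ω j) := fun j =>
    Complex.continuous_conj.measurable.comp (mxj j)
  have mEij : ∀ i j, Measurable[mE] fun ω => E ω i j := fun i j =>
    (measurable_pi_apply j).comp
      ((measurable_pi_apply i).comp (by rw [hmE]; exact meas_comap (fun ω => (fun i j => E ω i j))))
  have mMij : ∀ i j, Measurable[mE] fun ω => M ω i j := by
    intro i j
    simp only [hMapply]
    exact measurable_const.add (Finset.measurable_sum _ fun k _ => (mEij i k).mul_const _)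
  -- ℒ² facts
  have hGL2 : ∀ i j, MemLp (fun ω => ∑ k, E ω i k * F k j) 2 μ := by
    intro i j
    apply memLp_finset_sum (μ := μ)
    intro k _
    have h := (hEL2 i k).const_mul (F k j)
    apply h.ae_eq
    filter_upwards with ω using mul_comm _ _
  have hML2 : ∀ i j, MemLp (fun ω => M ω i j) 2 μ := by
    intro i j
    simp only [hMapply]
    exact (memLp_const (μ := μ) (p := 2) (B i j)).add (hGL2 i j)
  -- integrability
  have intE : ∀ i j, Integrable (fun ω => E ω i j) μ := fun i j =>
    (hEL2 i j).integrable one_le_two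
  have intG : ∀ i j, Integrable (fun ω => ∑ k, E ω i k * F k j) μ := fun i j =>
    (hGL2 i j).integrable one_le_two
  have intM : ∀ i j, Integrable (fun ω => M ω i j) μ := fun i j =>
    (hML2 i j).integrable one_le_two
  have intMM : ∀ i j k, Integrable (fun ω => M ω i j * (starRingEnd ℂ) (M ω i k)) μ :=
    fun i j k => integrable_mul_L2 (hML2 i j) (memLp_conj (hML2 i k))
  have intxx : ∀ j k, Integrable (fun ω => x ω j * (starRingEnd ℂ) (x ω k)) μ :=
    fun j k => integrable_mul_L2 (hxL2 j) (memLp_conj (hxL2 k))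
  have intxn : ∀ j i, Integrable (fun ω => x ω j * (starRingEnd ℂ) (nbar ω i)) μ :=
    fun j i => integrable_mul_L2 (hxL2 j) (memLp_conj (hnL2 i))
  have intnn : ∀ i j, Integrable (fun ω => nbar ω i * (starRingEnd ℂ) (nbar ω j)) μ :=
    fun i j => integrable_mul_L2 (hnL2 i) (memLp_conj (hnL2 j))
  have intEEc : ∀ i k l, Integrable (fun ω => E ω i k * (starRingEnd ℂ) (E ω i l)) μ :=
    fun i k l => integrable_mul_L2 (hEL2 i k) (memLp_conj (hEL2 i l))
  have intGG : ∀ i j, Integrable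
      (fun ω => (∑ k, E ω i k * F k j) * (starRingEnd ℂ) (∑ l, E ω i l * F l j)) μ :=
    fun i j => integrable_mul_L2 (hGL2 i j) (memLp_conj (hGL2 i j))
  -- basic integral identities
  have iG0 : ∀ i j, ∫ ω, (∑ k, E ω i k * F k j) ∂μ = 0 := by
    intro i j
    rw [integral_finset_sum _ (fun k _ => (intE i k).mul_const _)]
    refine Finset.sum_eq_zero fun k _ => ?_
    rw [integral_mul_const, hE0 i k, zero_mul]
  have iGc0 : ∀ i j, ∫ ω, (starRingEnd ℂ) (∑ k, E ω i k * F k j) ∂μ = 0 := by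
    intro i j
    rw [integral_conj'', iG0 i j, map_zero]
  have key2 : ∀ j i, ∫ ω, x ω j * (starRingEnd ℂ) (nbar ω i) ∂μ = 0 := by
    intro j i
    rw [(indepFun_of_measurable IXN (mxj j) (mnjc i)).integral_mul_complex
      ((hxL2 j).integrable one_le_two) ((memLp_conj (hnL2 i)).integrable one_le_two),
      hx0 j, zero_mul]
  have key3 : ∀ i j, ∫ ω, M ω i j * (x ω j * (starRingEnd ℂ) (nbar ω i)) ∂μ = 0 := by
    intro i j
    have hg : Measurable[mX ⊔ mN] fun ω => x ω j * (starRingEnd ℂ) (nbar ω i) :=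
      ((mxj j).mono le_sup_left le_rfl).mul ((mnjc i).mono le_sup_right le_rfl)
    rw [(indepFun_of_measurable IE_XN (mMij i j) hg).integral_mul_complex (intM i j) (intxn j i),
      key2 j i, mul_zero]
  have key1 : ∀ i j k, ∫ ω, (M ω i j * (starRingEnd ℂ) (M ω i k))
        * (x ω j * (starRingEnd ℂ) (x ω k)) ∂μ =
      (∫ ω, M ω i j * (starRingEnd ℂ) (M ω i k) ∂μ) * (1 : Matrix (Fin n) (Fin n) ℂ) j k := by
    intro i j k
    have hmc : Measurable[mE] fun ω => (starRingEnd ℂ) (M ω i k) :=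
      Complex.continuous_conj.measurable.comp (mMij i k)
    have hmm : Measurable[mE] fun ω => M ω i j * (starRingEnd ℂ) (M ω i k) :=
      (mMij i j).mul hmc
    have hxxm : Measurable[mX] fun ω => x ω j * (starRingEnd ℂ) (x ω k) :=
      (mxj j).mul (mxjc k)
    rw [(indepFun_of_measurable IEX hmm hxxm).integral_mul_complex
      (intMM i j k) (intxx j k), hxx j k]
  have keyEE : ∀ k l, ∑ i, ∫ ω, E ω i k * (starRingEnd ℂ) (E ω i l) ∂μ =
      (((P : ℝ) * σe2 : ℝ) : ℂ) * (1 : Matrix (Fin n) (Fin n) ℂ) k l := by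
    intro k l
    rw [← integral_finset_sum _ (fun i _ => intEEc i k l)]
    have hpt : ∀ ω : Ω, (∑ i, E ω i k * (starRingEnd ℂ) (E ω i l))
        = (starRingEnd ℂ) (((E ω)ᴴ * E ω) k l) := by
      intro ω
      rw [Matrix.mul_apply]
      simp only [_root_.map_sum]
      refine Finset.sum_congr rfl fun i _ => ?_
      rw [Matrix.conjTranspose_apply]
      simp [Complex.star_def, _root_.map_mul, Complex.conj_conj, mul_comm]
    simp_rw [hpt]
    rw [integral_conj'', hEE k l]
    rcases eq_or_ne k l with h | h
    · subst h
      simp [Matrix.smul_apply, Matrix.one_apply_eq, smul_eq_mul, mul_one, Complex.conj_ofReal]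
    · simp [Matrix.smul_apply, Matrix.one_apply_ne h]
  have keyGGpt : ∀ (i j : Fin n) (ω : Ω),
      (∑ k, E ω i k * F k j) * (starRingEnd ℂ) (∑ l, E ω i l * F l j)
      = ∑ k, ∑ l, (E ω i k * (starRingEnd ℂ) (E ω i l))
          * (F k j * (starRingEnd ℂ) (F l j)) := by
    intro i j ω
    rw [map_sum, Finset.sum_mul_sum]
    refine Finset.sum_congr rfl fun k _ => Finset.sum_congr rfl fun l _ => ?_
    simp only [_root_.map_mul]
    ring
  have iGGrow : ∀ i j, ∫ ω, (∑ k, E ω i k * F k j)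
        * (starRingEnd ℂ) (∑ l, E ω i l * F l j) ∂μ
      = ∑ k, ∑ l, (∫ ω, E ω i k * (starRingEnd ℂ) (E ω i l) ∂μ)
          * (F k j * (starRingEnd ℂ) (F l j)) := by
    intro i j
    simp_rw [keyGGpt i j]
    rw [integral_finset_sum _
      (fun k _ => integrable_finset_sum _ (fun l _ => (intEEc i k l).mul_const _))]
    refine Finset.sum_congr rfl fun k _ => ?_
    rw [integral_finset_sum _ (fun l _ => (intEEc i k l).mul_const _)]
    exact Finset.sum_congr rfl fun l _ => integral_mul_const _ _
  have keyGG : ∑ i, ∑ j, ∫ ω, (∑ k, E ω i k * F k j)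
        * (starRingEnd ℂ) (∑ l, E ω i l * F l j) ∂μ
      = (((P : ℝ) * σe2 : ℝ) : ℂ) * ((frobSq F : ℝ) : ℂ) := by
    simp_rw [iGGrow]
    rw [Finset.sum_comm]
    have hswap : ∀ j : Fin n,
        (∑ i, ∑ k, ∑ l, (∫ ω, E ω i k * (starRingEnd ℂ) (E ω i l) ∂μ)
          * (F k j * (starRingEnd ℂ) (F l j)))
        = ∑ k, ∑ l, (((P : ℝ) * σe2 : ℝ) : ℂ) * (1 : Matrix (Fin n) (Fin n) ℂ) k l
            * (F k j * (starRingEnd ℂ) (F l j)) := by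
      intro j
      rw [Finset.sum_comm]
      refine Finset.sum_congr rfl fun k _ => ?_
      rw [Finset.sum_comm]
      refine Finset.sum_congr rfl fun l _ => ?_
      rw [← Finset.sum_mul, keyEE k l]
    simp_rw [hswap]
    have hrow : ∀ (j k : Fin n),
        (∑ l, (((P : ℝ) * σe2 : ℝ) : ℂ) * (1 : Matrix (Fin n) (Fin n) ℂ) k l
          * (F k j * (starRingEnd ℂ) (F l j)))
        = (((P : ℝ) * σe2 : ℝ) : ℂ) * ((Complex.normSq (F k j) : ℝ) : ℂ) := by
      intro j k
      rw [Finset.sum_eq_single k]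
      · rw [Matrix.one_apply_eq, mul_one, Complex.mul_conj]
      · intro l _ hlk
        rw [Matrix.one_apply_ne (Ne.symm hlk), mul_zero, zero_mul]
      · intro h; exact absurd (Finset.mem_univ k) h
    simp_rw [hrow, ← Finset.mul_sum]
    congr 1
    rw [Finset.sum_comm]
    push_cast [frobSq]
    rfl
  have iMM : ∀ i j, ∫ ω, M ω i j * (starRingEnd ℂ) (M ω i j) ∂μ
      = B i j * (starRingEnd ℂ) (B i j)
        + ∫ ω, (∑ k, E ω i k * F k j) * (starRingEnd ℂ) (∑ l, E ω i l * F l j) ∂μ := by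
    intro i j
    have hpt : ∀ ω : Ω, M ω i j * (starRingEnd ℂ) (M ω i j)
        = B i j * (starRingEnd ℂ) (B i j)
          + ((B i j * (starRingEnd ℂ) (∑ k, E ω i k * F k j)
              + (starRingEnd ℂ) (B i j) * (∑ k, E ω i k * F k j))
            + (∑ k, E ω i k * F k j) * (starRingEnd ℂ) (∑ l, E ω i l * F l j)) := by
      intro ω
      rw [hMapply]
      simp only [_root_.map_add]
      ring
    simp_rw [hpt]
    have i1 : Integrable (fun ω => B i j * (starRingEnd ℂ) (∑ k, E ω i k * F k j)) μ :=
      (integrable_conj' (intG i j)).const_mul _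
    have i2 : Integrable (fun ω => (starRingEnd ℂ) (B i j) * (∑ k, E ω i k * F k j)) μ :=
      (intG i j).const_mul _
    have i12 : Integrable (fun ω => B i j * (starRingEnd ℂ) (∑ k, E ω i k * F k j)
        + (starRingEnd ℂ) (B i j) * (∑ k, E ω i k * F k j)) μ := i1.add i2
    have i123 : Integrable (fun ω => (B i j * (starRingEnd ℂ) (∑ k, E ω i k * F k j)
        + (starRingEnd ℂ) (B i j) * (∑ k, E ω i k * F k j))
        + (∑ k, E ω i k * F k j) * (starRingEnd ℂ) (∑ l, E ω i l * F l j)) μ :=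
      i12.add (intGG i j)
    rw [integral_add (integrable_const _) i123, integral_add i12 (intGG i j),
      integral_add i1 i2, integral_const, integral_const_mul, integral_const_mul, iG0, iGc0]
    simp [measure_univ]
  have keyMMsum : ∑ i, ∑ j, ∫ ω, M ω i j * (starRingEnd ℂ) (M ω i j) ∂μ
      = ((frobSq B : ℝ) : ℂ) + (((P : ℝ) * σe2 : ℝ) : ℂ) * ((frobSq F : ℝ) : ℂ) := by
    simp_rw [iMM, Finset.sum_add_distrib]
    rw [keyGG]
    congr 1
    push_cast [frobSq]
    refine Finset.sum_congr rfl fun i _ => Finset.sum_congr rfl fun j _ => ?_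
    rw [Complex.mul_conj]
  -- the three pieces of the expansion
  obtain ⟨T1, hT1def⟩ : ∃ T1 : Ω → ℂ, T1 = fun ω => ∑ i, ∑ j, ∑ k,
      (M ω i j * (starRingEnd ℂ) (M ω i k)) * (x ω j * (starRingEnd ℂ) (x ω k)) := ⟨_, rfl⟩
  obtain ⟨T2, hT2def⟩ : ∃ T2 : Ω → ℂ, T2 = fun ω => ∑ i, ∑ j,
      ((γ⁻¹ : ℝ) : ℂ) * (M ω i j * (x ω j * (starRingEnd ℂ) (nbar ω i))) := ⟨_, rfl⟩
  obtain ⟨T4, hT4def⟩ : ∃ T4 : Ω → ℂ, T4 = fun ω =>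
      ((γ⁻¹ : ℝ) : ℂ) ^ 2 * ∑ i, nbar ω i * (starRingEnd ℂ) (nbar ω i) := ⟨_, rfl⟩
  -- pointwise identity
  have hnormv : ∀ ω, vecNormSq (((Hhat + E ω) * F - 1).mulVec (x ω) + γ⁻¹ • nbar ω)
      = (T1 ω + (T2 ω + ((starRingEnd ℂ) (T2 ω) + T4 ω))).re := by
    intro ω
    have hMrw : (Hhat + E ω) * F - 1 = M ω := by
      rw [hMdef, hBdef]
      rw [add_mul]
      abel
    rw [hMrw]
    have hv : ∀ i, ((M ω).mulVec (x ω) + γ⁻¹ • nbar ω) i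
        = (∑ j, M ω i j * x ω j) + ((γ⁻¹ : ℝ) : ℂ) * nbar ω i := by
      intro i
      simp [Matrix.mulVec, dotProduct, Complex.real_smul]
    have expand : ∀ i, (((∑ j, M ω i j * x ω j) + ((γ⁻¹ : ℝ) : ℂ) * nbar ω i)
          * (starRingEnd ℂ) ((∑ j, M ω i j * x ω j) + ((γ⁻¹ : ℝ) : ℂ) * nbar ω i))
        = (∑ j, ∑ k, (M ω i j * (starRingEnd ℂ) (M ω i k)) * (x ω j * (starRingEnd ℂ) (x ω k)))
          + ((∑ j, ((γ⁻¹ : ℝ) : ℂ) * (M ω i j * (x ω j * (starRingEnd ℂ) (nbar ω i))))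
            + ((starRingEnd ℂ) (∑ j, ((γ⁻¹ : ℝ) : ℂ)
                  * (M ω i j * (x ω j * (starRingEnd ℂ) (nbar ω i))))
              + ((γ⁻¹ : ℝ) : ℂ) ^ 2 * (nbar ω i * (starRingEnd ℂ) (nbar ω i)))) := by
      intro i
      have h1 : (∑ j, M ω i j * x ω j) * (starRingEnd ℂ) (∑ k, M ω i k * x ω k)
          = ∑ j, ∑ k, (M ω i j * (starRingEnd ℂ) (M ω i k))
              * (x ω j * (starRingEnd ℂ) (x ω k)) := by
        rw [_root_.map_sum, Finset.sum_mul_sum]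
        refine Finset.sum_congr rfl fun j _ => Finset.sum_congr rfl fun k _ => ?_
        simp only [_root_.map_mul]
        ring
      have h2 : (∑ j, M ω i j * x ω j) * (starRingEnd ℂ) (((γ⁻¹ : ℝ) : ℂ) * nbar ω i)
          = ∑ j, ((γ⁻¹ : ℝ) : ℂ) * (M ω i j * (x ω j * (starRingEnd ℂ) (nbar ω i))) := by
        rw [_root_.map_mul, Complex.conj_ofReal, Finset.sum_mul]
        refine Finset.sum_congr rfl fun j _ => ?_
        ring
      have h3 : (((γ⁻¹ : ℝ) : ℂ) * nbar ω i) * (starRingEnd ℂ) (∑ j, M ω i j * x ω j)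
          = (starRingEnd ℂ) ((∑ j, M ω i j * x ω j)
              * (starRingEnd ℂ) (((γ⁻¹ : ℝ) : ℂ) * nbar ω i)) := by
        simp only [_root_.map_mul, Complex.conj_conj]
        ring
      have h4 : (((γ⁻¹ : ℝ) : ℂ) * nbar ω i)
            * (starRingEnd ℂ) (((γ⁻¹ : ℝ) : ℂ) * nbar ω i)
          = ((γ⁻¹ : ℝ) : ℂ) ^ 2 * (nbar ω i * (starRingEnd ℂ) (nbar ω i)) := by
        simp only [_root_.map_mul, Complex.conj_ofReal]
        ring
      calc ((∑ j, M ω i j * x ω j) + ((γ⁻¹ : ℝ) : ℂ) * nbar ω i)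
            * (starRingEnd ℂ) ((∑ j, M ω i j * x ω j) + ((γ⁻¹ : ℝ) : ℂ) * nbar ω i)
          = (∑ j, M ω i j * x ω j) * (starRingEnd ℂ) (∑ k, M ω i k * x ω k)
            + ((∑ j, M ω i j * x ω j) * (starRingEnd ℂ) (((γ⁻¹ : ℝ) : ℂ) * nbar ω i)
              + ((((γ⁻¹ : ℝ) : ℂ) * nbar ω i) * (starRingEnd ℂ) (∑ j, M ω i j * x ω j)
                + (((γ⁻¹ : ℝ) : ℂ) * nbar ω i)
                    * (starRingEnd ℂ) (((γ⁻¹ : ℝ) : ℂ) * nbar ω i))) := by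
            simp only [_root_.map_add]
            ring
        _ = _ := by rw [h1, h2, h3, h2, h4]
    have hterm : ∀ i, Complex.normSq (((M ω).mulVec (x ω) + γ⁻¹ • nbar ω) i)
        = ((((∑ j, M ω i j * x ω j) + ((γ⁻¹ : ℝ) : ℂ) * nbar ω i)
            * (starRingEnd ℂ) ((∑ j, M ω i j * x ω j)
                + ((γ⁻¹ : ℝ) : ℂ) * nbar ω i))).re := by
      intro i
      rw [hv i, Complex.mul_conj, Complex.ofReal_re]
    rw [vecNormSq]
    simp_rw [hterm, expand]
    rw [← Complex.re_sum]
    congr 1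
    rw [Finset.sum_add_distrib, Finset.sum_add_distrib, Finset.sum_add_distrib]
    rw [hT1def, hT2def, hT4def]
    rw [← _root_.map_sum, ← Finset.mul_sum]
  -- integrability of the pieces
  have intT1term : ∀ (i j k : Fin n), Integrable
      (fun ω => (M ω i j * (starRingEnd ℂ) (M ω i k))
        * (x ω j * (starRingEnd ℂ) (x ω k))) μ := by
    intro i j k
    have hmc : Measurable[mE] fun ω => (starRingEnd ℂ) (M ω i k) :=
      Complex.continuous_conj.measurable.comp (mMij i k)
    have hmm : Measurable[mE] fun ω => M ω i j * (starRingEnd ℂ) (M ω i k) :=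
      (mMij i j).mul hmc
    have hxxm : Measurable[mX] fun ω => x ω j * (starRingEnd ℂ) (x ω k) :=
      (mxj j).mul (mxjc k)
    exact (indepFun_of_measurable IEX hmm hxxm).integrable_mul (intMM i j k) (intxx j k)
  have intT2term : ∀ (i j : Fin n),
      Integrable (fun ω => M ω i j * (x ω j * (starRingEnd ℂ) (nbar ω i))) μ := by
    intro i j
    have hg : Measurable[mX ⊔ mN] fun ω => x ω j * (starRingEnd ℂ) (nbar ω i) :=
      ((mxj j).mono le_sup_left le_rfl).mul ((mnjc i).mono le_sup_right le_rfl)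
    exact (indepFun_of_measurable IE_XN (mMij i j) hg).integrable_mul (intM i j) (intxn j i)
  have intT1 : Integrable T1 μ := by
    rw [hT1def]
    apply integrable_finset_sum
    intro i _
    apply integrable_finset_sum
    intro j _
    exact integrable_finset_sum _ fun k _ => intT1term i j k
  have intT2 : Integrable T2 μ := by
    rw [hT2def]
    apply integrable_finset_sum
    intro i _
    exact integrable_finset_sum _ fun j _ => (intT2term i j).const_mul _
  have intT2c : Integrable (fun ω => (starRingEnd ℂ) (T2 ω)) μ := integrable_conj' intT2
  have intT4 : Integrable T4 μ := by
    rw [hT4def]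
    exact (integrable_finset_sum _ fun i (_ : i ∈ Finset.univ) => intnn i i).const_mul _
  -- values of the integrals
  have iT1 : ∫ ω, T1 ω ∂μ
      = ((frobSq B : ℝ) : ℂ) + (((P : ℝ) * σe2 : ℝ) : ℂ) * ((frobSq F : ℝ) : ℂ) := by
    rw [hT1def]
    rw [integral_finset_sum _ (fun i _ => integrable_finset_sum _
      (fun j _ => integrable_finset_sum _ fun k _ => intT1term i j k))]
    have hstep : ∀ i : Fin n, (∫ ω, ∑ j, ∑ k, (M ω i j * (starRingEnd ℂ) (M ω i k))
          * (x ω j * (starRingEnd ℂ) (x ω k)) ∂μ)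
        = ∑ j, ∫ ω, M ω i j * (starRingEnd ℂ) (M ω i j) ∂μ := by
      intro i
      rw [integral_finset_sum _ (fun j _ => integrable_finset_sum _ fun k _ => intT1term i j k)]
      refine Finset.sum_congr rfl fun j _ => ?_
      rw [integral_finset_sum _ (fun k _ => intT1term i j k)]
      rw [Finset.sum_congr rfl (fun k _ => key1 i j k)]
      rw [Finset.sum_eq_single j]
      · rw [Matrix.one_apply_eq, mul_one]
      · intro k _ hkj
        rw [Matrix.one_apply_ne (Ne.symm hkj), mul_zero]
      · intro h
        exact absurd (Finset.mem_univ j) h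
    rw [Finset.sum_congr rfl (fun i _ => hstep i)]
    exact keyMMsum
  have iT2 : ∫ ω, T2 ω ∂μ = 0 := by
    rw [hT2def]
    rw [integral_finset_sum _
      (fun i _ => integrable_finset_sum _ fun j _ => (intT2term i j).const_mul _)]
    refine Finset.sum_eq_zero fun i _ => ?_
    rw [integral_finset_sum _ (fun j _ => (intT2term i j).const_mul _)]
    refine Finset.sum_eq_zero fun j _ => ?_
    rw [integral_const_mul, key3 i j, mul_zero]
  have iT2c : ∫ ω, (starRingEnd ℂ) (T2 ω) ∂μ = 0 := by
    rw [integral_conj'', iT2, map_zero]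
  have iT4 : ∫ ω, T4 ω ∂μ = ((((γ⁻¹ : ℝ) ^ 2 * ((n : ℝ) * σn2)) : ℝ) : ℂ) := by
    rw [hT4def]
    rw [integral_const_mul, integral_finset_sum _ (fun i (_ : i ∈ Finset.univ) => intnn i i)]
    have : ∀ i : Fin n, ∫ ω, nbar ω i * (starRingEnd ℂ) (nbar ω i) ∂μ = ((σn2 : ℝ) : ℂ) := by
      intro i
      rw [hnn i i]
      simp [Matrix.smul_apply, Matrix.one_apply_eq, smul_eq_mul]
    rw [Finset.sum_congr rfl (fun i _ => this i), Finset.sum_const, Finset.card_univ,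
      Fintype.card_fin, nsmul_eq_mul]
    push_cast
    ring
  -- scalar facts
  have htrace : (Matrix.trace (F * Fᴴ)).re = frobSq F := by
    have h : Matrix.trace (F * Fᴴ) = ((frobSq F : ℝ) : ℂ) := by
      rw [Matrix.trace, frobSq]
      push_cast
      refine Finset.sum_congr rfl fun i _ => ?_
      rw [Matrix.diag_apply, Matrix.mul_apply]
      refine Finset.sum_congr rfl fun j _ => ?_
      rw [Matrix.conjTranspose_apply, Complex.star_def, Complex.mul_conj]
    rw [h, Complex.ofReal_re]
  have hFpos : 0 < frobSq F := by
    have hex : ∃ i j, F i j ≠ 0 := by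
      by_contra h
      push_neg at h
      exact hF (by ext i j; simpa using h i j)
    obtain ⟨i0, j0, hij⟩ := hex
    refine Finset.sum_pos' (fun a _ => Finset.sum_nonneg fun b _ => Complex.normSq_nonneg _)
      ⟨i0, Finset.mem_univ i0, Finset.sum_pos'
        (fun b _ => Complex.normSq_nonneg _)
        ⟨j0, Finset.mem_univ j0, Complex.normSq_pos.mpr hij⟩⟩
  have hnR : (0 : ℝ) < (n : ℝ) := by exact_mod_cast hn
  have hγpos : 0 < γ := by
    rw [hγ, htrace]
    exact Real.sqrt_pos.mpr (div_pos hnR hFpos)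
  have hγsq : γ ^ 2 = (n : ℝ) / frobSq F := by
    rw [hγ, htrace, Real.sq_sqrt (le_of_lt (div_pos hnR hFpos))]
  have hscal : (γ⁻¹) ^ 2 * (n : ℝ) = frobSq F := by
    rw [inv_pow, hγsq]
    field_simp
  -- put everything together
  have hint : ∫ ω, vecNormSq (((Hhat + E ω) * F - 1).mulVec (x ω) + γ⁻¹ • nbar ω) ∂μ
      = ∫ ω, (T1 ω + (T2 ω + ((starRingEnd ℂ) (T2 ω) + T4 ω))).re ∂μ :=
    integral_congr_ae (Filter.Eventually.of_forall fun ω => hnormv ω)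
  rw [hint]
  have intTsum : Integrable (fun ω => T1 ω + (T2 ω + ((starRingEnd ℂ) (T2 ω) + T4 ω))) μ :=
    intT1.add (intT2.add (intT2c.add intT4))
  rw [integral_complex_re intTsum]
  have i234 : Integrable (fun ω => T2 ω + ((starRingEnd ℂ) (T2 ω) + T4 ω)) μ :=
    intT2.add (intT2c.add intT4)
  have i34 : Integrable (fun ω => (starRingEnd ℂ) (T2 ω) + T4 ω) μ := intT2c.add intT4
  rw [integral_add intT1 i234, integral_add intT2 i34, integral_add intT2c intT4,
    iT1, iT2, iT2c, iT4, hBdef]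
  simp only [zero_add, Complex.add_re, Complex.mul_re, Complex.ofReal_re, Complex.ofReal_im,
    mul_zero, sub_zero, zero_mul]
  have hfin : (γ⁻¹) ^ 2 * ((n : ℝ) * σn2) = σn2 * frobSq F := by
    rw [← mul_assoc, hscal]
    ring
  rw [hfin]
  ring

lemma exists_measurable_mk_pi {Ω : Type*} {mΩ : MeasurableSpace Ω} {μ : MeasureTheory.Measure Ω}
    {ι : Type*} [Countable ι] {g : Ω → ι → ℂ}
    (h : ∀ i, AEStronglyMeasurable (fun ω => g ω i) μ) :
    ∃ g' : Ω → ι → ℂ, Measurable g' ∧ g =ᵐ[μ] g' := by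
  have h' : ∀ i, ∃ f : Ω → ℂ, Measurable f ∧ (fun ω => g ω i) =ᵐ[μ] f := fun i =>
    ⟨(h i).mk _, (h i).stronglyMeasurable_mk.measurable, (h i).ae_eq_mk⟩
  choose gm hm hae using h'
  refine ⟨fun ω i => gm i ω, measurable_pi_iff.mpr hm, ?_⟩
  have hall : ∀ᵐ ω ∂μ, ∀ i, g ω i = gm i ω := ae_all_iff.mpr hae
  filter_upwards [hall] with ω hω
  funext i
  exact hω i

lemma exists_measurable_mk_pi2 {Ω : Type*} {mΩ : MeasurableSpace Ω} {μ : MeasureTheory.Measure Ω}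
    {ι κ : Type*} [Countable ι] [Countable κ] {g : Ω → ι → κ → ℂ}
    (h : ∀ i j, AEStronglyMeasurable (fun ω => g ω i j) μ) :
    ∃ g' : Ω → ι → κ → ℂ, Measurable g' ∧ g =ᵐ[μ] g' := by
  have h' : ∀ i j, ∃ f : Ω → ℂ, Measurable f ∧ (fun ω => g ω i j) =ᵐ[μ] f := fun i j =>
    ⟨(h i j).mk _, (h i j).stronglyMeasurable_mk.measurable, (h i j).ae_eq_mk⟩
  choose gm hm hae using h'
  refine ⟨fun ω i j => gm i j ω, measurable_pi_iff.mpr fun i => measurable_pi_iff.mpr (hm i), ?_⟩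
  have hall : ∀ᵐ ω ∂μ, ∀ i j, g ω i j = gm i j ω :=
    ae_all_iff.mpr fun i => ae_all_iff.mpr fun j => hae i j
  filter_upwards [hall] with ω hω
  funext i j
  exact hω i j

/-- **Per-sensor MSE under imperfect CSI and receiver noise (Eq. (22)).**
With data `x` of identity covariance, zero-mean estimation error `E` with
`𝔼[Eᴴ·E] = P·σₑ²·I`, receiver noise `n̄` with `𝔼[n̄·n̄ᴴ] = σₙ²·I`, all mutually
independent and zero-mean, and the power normalization factor
`γ = √(n / tr(F·Fᴴ))`, one has
`𝔼[‖((Ĥ + E)·F − I)·x + γ⁻¹·n̄‖²] = ‖Ĥ·F − I‖_F² + (σₙ² + P·σₑ²)·‖F‖_F²`. -/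
theorem mse_simplification_with_noise
    {Ω : Type*} [MeasurableSpace Ω] (μ : Measure Ω) [IsProbabilityMeasure μ]
    (n : ℕ) (hn : 0 < n)
    (Hhat F : Matrix (Fin n) (Fin n) ℂ) (hF : F ≠ 0)
    (x nbar : Ω → Fin n → ℂ) (E : Ω → Matrix (Fin n) (Fin n) ℂ)
    (hxL2 : ∀ i, MemLp (fun ω => x ω i) 2 μ)
    (hnL2 : ∀ i, MemLp (fun ω => nbar ω i) 2 μ)
    (hEL2 : ∀ i j, MemLp (fun ω => E ω i j) 2 μ)
    (P : ℕ) (hP : 0 < P) (σe2 σn2 : ℝ) (hσe : 0 ≤ σe2) (hσn : 0 ≤ σn2)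
    (hxx : ∀ i j, ∫ ω, x ω i * (starRingEnd ℂ) (x ω j) ∂μ =
      (1 : Matrix (Fin n) (Fin n) ℂ) i j)
    (hE0 : ∀ i j, ∫ ω, E ω i j ∂μ = 0)
    (hEE : ∀ i j, ∫ ω, ((E ω)ᴴ * E ω) i j ∂μ =
      (((P : ℝ) * σe2 : ℝ) : ℂ) • (1 : Matrix (Fin n) (Fin n) ℂ) i j)
    (hnn : ∀ i j, ∫ ω, nbar ω i * (starRingEnd ℂ) (nbar ω j) ∂μ =
      ((σn2 : ℂ)) • (1 : Matrix (Fin n) (Fin n) ℂ) i j)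
    (hx0 : ∀ i, ∫ ω, x ω i ∂μ = 0)
    (hn0 : ∀ i, ∫ ω, nbar ω i ∂μ = 0)
    (hindep : iIndep
      ![MeasurableSpace.comap x inferInstance,
        MeasurableSpace.comap (fun ω => fun i j => E ω i j) inferInstance,
        MeasurableSpace.comap nbar inferInstance] μ)
    (γ : ℝ) (hγ : γ = Real.sqrt ((n : ℝ) / (Matrix.trace (F * Fᴴ)).re)) :
    ∫ ω, vecNormSq (((Hhat + E ω) * F - 1).mulVec (x ω) + γ⁻¹ • nbar ω) ∂μ =
      frobSq (Hhat * F - 1) + (σn2 + (P : ℝ) * σe2) * frobSq F := by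
  classical
  obtain ⟨x', hxm', haex⟩ := exists_measurable_mk_pi (μ := μ) (g := x)
    (fun i => (hxL2 i).aestronglyMeasurable)
  obtain ⟨n', hnm', haen⟩ := exists_measurable_mk_pi (μ := μ) (g := nbar)
    (fun i => (hnL2 i).aestronglyMeasurable)
  obtain ⟨E'', hEm'', haeE0⟩ := exists_measurable_mk_pi2 (μ := μ)
    (g := fun ω => (fun i j => E ω i j)) (fun i j => (hEL2 i j).aestronglyMeasurable)
  obtain ⟨E', hE'def⟩ : ∃ E' : Ω → Matrix (Fin n) (Fin n) ℂ, E' = E'' := ⟨E'', rfl⟩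
  have hEm' : Measurable (fun ω => (fun i j => E' ω i j)) := by rw [hE'def]; exact hEm''
  have haeE : (fun ω => (fun i j => E ω i j)) =ᵐ[μ] (fun ω => (fun i j => E' ω i j)) := by
    rw [hE'def]; exact haeE0
  have haexi : ∀ i, (fun ω => x ω i) =ᵐ[μ] fun ω => x' ω i := fun i =>
    haex.mono fun ω h => congrFun h i
  have haeni : ∀ i, (fun ω => nbar ω i) =ᵐ[μ] fun ω => n' ω i := fun i =>
    haen.mono fun ω h => congrFun h i
  have haeEij : ∀ i j, (fun ω => E ω i j) =ᵐ[μ] fun ω => E' ω i j := fun i j =>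
    haeE.mono fun ω h => congrFun (congrFun h i) j
  have haeEm : ∀ᵐ ω ∂μ, E ω = E' ω :=
    haeE.mono fun ω h => Matrix.ext fun i j => congrFun (congrFun h i) j
  -- transfer the moment hypotheses
  have hxL2' : ∀ i, MemLp (fun ω => x' ω i) 2 μ := fun i => (hxL2 i).ae_eq (haexi i)
  have hnL2' : ∀ i, MemLp (fun ω => n' ω i) 2 μ := fun i => (hnL2 i).ae_eq (haeni i)
  have hEL2' : ∀ i j, MemLp (fun ω => E' ω i j) 2 μ := fun i j => (hEL2 i j).ae_eq (haeEij i j)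
  have hxx' : ∀ i j, ∫ ω, x' ω i * (starRingEnd ℂ) (x' ω j) ∂μ =
      (1 : Matrix (Fin n) (Fin n) ℂ) i j := by
    intro i j
    rw [← hxx i j]
    apply integral_congr_ae
    filter_upwards [haexi i, haexi j] with ω h1 h2
    rw [h1, h2]
  have hE0' : ∀ i j, ∫ ω, E' ω i j ∂μ = 0 := by
    intro i j
    rw [← hE0 i j]
    exact integral_congr_ae (haeEij i j).symm
  have hEE' : ∀ i j, ∫ ω, ((E' ω)ᴴ * E' ω) i j ∂μ =
      (((P : ℝ) * σe2 : ℝ) : ℂ) • (1 : Matrix (Fin n) (Fin n) ℂ) i j := by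
    intro i j
    rw [← hEE i j]
    apply integral_congr_ae
    filter_upwards [haeEm] with ω h
    rw [h]
  have hnn' : ∀ i j, ∫ ω, n' ω i * (starRingEnd ℂ) (n' ω j) ∂μ =
      ((σn2 : ℂ)) • (1 : Matrix (Fin n) (Fin n) ℂ) i j := by
    intro i j
    rw [← hnn i j]
    apply integral_congr_ae
    filter_upwards [haeni i, haeni j] with ω h1 h2
    rw [h1, h2]
  have hx0' : ∀ i, ∫ ω, x' ω i ∂μ = 0 := by
    intro i
    rw [← hx0 i]
    exact integral_congr_ae (haexi i).symm
  have hn0' : ∀ i, ∫ ω, n' ω i ∂μ = 0 := by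
    intro i
    rw [← hn0 i]
    exact integral_congr_ae (haeni i).symm
  -- transfer independence
  have hindep' : iIndep
      ![MeasurableSpace.comap x' inferInstance,
        MeasurableSpace.comap (fun ω => fun i j => E' ω i j) inferInstance,
        MeasurableSpace.comap n' inferInstance] μ := by
    refine iIndep_congr_sets (μ := μ) ?_ hindep
    intro i
    fin_cases i
    · intro s hs
      obtain ⟨A, hA, rfl⟩ := hs
      refine ⟨x ⁻¹' A, ⟨A, hA, rfl⟩, ?_⟩
      rw [Filter.eventuallyEq_set]
      filter_upwards [haex] with ω h
      simp [Set.mem_preimage, h]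
    · intro s hs
      obtain ⟨A, hA, rfl⟩ := hs
      refine ⟨(fun ω => (fun i j => E ω i j)) ⁻¹' A, ⟨A, hA, rfl⟩, ?_⟩
      rw [Filter.eventuallyEq_set]
      filter_upwards [haeE] with ω h
      simp [Set.mem_preimage, h]
    · intro s hs
      obtain ⟨A, hA, rfl⟩ := hs
      refine ⟨nbar ⁻¹' A, ⟨A, hA, rfl⟩, ?_⟩
      rw [Filter.eventuallyEq_set]
      filter_upwards [haen] with ω h
      simp [Set.mem_preimage, h]
  have hgoal : ∫ ω, vecNormSq (((Hhat + E ω) * F - 1).mulVec (x ω) + γ⁻¹ • nbar ω) ∂μ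
      = ∫ ω, vecNormSq (((Hhat + E' ω) * F - 1).mulVec (x' ω) + γ⁻¹ • n' ω) ∂μ := by
    apply integral_congr_ae
    filter_upwards [haex, haen, haeEm] with ω h1 h2 h3
    rw [h1, h2, h3]
  rw [hgoal]
  exact mse_core μ n hn Hhat F hF x' n' E' hxm' hnm' hEm' hxL2' hnL2' hEL2'
    P σe2 σn2 hxx' hE0' hEE' hnn' hx0' hn0' hindep' γ hγ
end

section
/- Let M, N, P be positive integers and set n = M·N. Let Π be the n×n cyclic shift permutation matrix with entries Π_{i,j} = 1 if i ≡ j + 1 (mod n) and 0 otherwise, and let Δ be the n×n diagonal matrix with diagonal entries exp(2πi·m/n) for m = 0, …, n−1. Let W_N be the normalized N-point DFT matrix with entries (W_N)_{j,k} = exp(−2πi·j·k/N)/√N, and set U = W_N^H ⊗ I_M (Kronecker product). Let l : Fin P → ℕ and k : Fin P → ℤ be given, let (Ω, μ) be a probability space, and let e_1, …, e_P : Ω → ℂ be square-integrable random variables with 𝔼[e_p] = 0 for all p, 𝔼[e_p · conj(e_q)] = 0 for p ≠ q, and 𝔼[|e_p|²] = σ_e² for all p, where σ_e² ≥ 0.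 Define E(ω) = (Σ_{p=1}^{P} e_p(ω) · Π^{l_p} · Δ^{k_p}) · U. Then the entrywise expectation of E^H·E equals P·σ_e²·I_n. -/
open Matrix MeasureTheory ProbabilityTheory Kronecker

/-- The `n×n` cyclic shift (delay) permutation matrix `Π`, with `Π i j = 1`
iff `i ≡ j + 1 (mod n)`. -/
def shiftMat (n : ℕ) : Matrix (Fin n) (Fin n) ℂ :=
  Matrix.of fun i j => if (i : ℕ) = ((j : ℕ) + 1) % n then 1 else 0

/-- The `n×n` Doppler diagonal matrix `Δ`, with diagonal entries `exp(2πi·m/n)`,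
`m = 0, …, n−1`. -/
noncomputable def dopplerMat (n : ℕ) : Matrix (Fin n) (Fin n) ℂ :=
  Matrix.diagonal fun m : Fin n => Complex.exp (2 * Real.pi * Complex.I * (m : ℕ) / n)

/-- The normalized `N`-point DFT matrix, `(W_N)_{j,k} = exp(−2πi·j·k/N)/√N`. -/
noncomputable def dftMat (N : ℕ) : Matrix (Fin N) (Fin N) ℂ :=
  Matrix.of fun j k =>
    Complex.exp (-(2 * Real.pi * Complex.I * (j : ℕ) * (k : ℕ)) / N) / (Real.sqrt N : ℂ)

/-- The OTFS modulation matrix `U = W_Nᴴ ⊗ I_M`, reindexed to `Fin (M·N)`. -/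
noncomputable def otfsMat (M N : ℕ) : Matrix (Fin (M * N)) (Fin (M * N)) ℂ :=
  Matrix.reindex (finProdFinEquiv.trans (finCongr (Nat.mul_comm N M)))
    (finProdFinEquiv.trans (finCongr (Nat.mul_comm N M)))
    ((dftMat N)ᴴ ⊗ₖ (1 : Matrix (Fin M) (Fin M) ℂ))

/-! ### Auxiliary lemmas -/

lemma shiftMat_apply (n : ℕ) [NeZero n] (i j : Fin n) :
    shiftMat n i j = if i = j + 1 then 1 else 0 := by
  simp only [shiftMat, of_apply]
  congr 1
  simp only [Fin.ext_iff, Fin.add_def, Fin.val_one']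
  rw [Nat.add_mod_mod]

lemma shiftMat_unitary_left (n : ℕ) [NeZero n] : (shiftMat n)ᴴ * shiftMat n = 1 := by
  ext i j
  simp [Matrix.mul_apply, shiftMat_apply, conjTranspose_apply, apply_ite (star : ℂ → ℂ),
    ite_mul, Finset.sum_ite_eq', Matrix.one_apply, add_left_inj, eq_comm]

lemma shiftMat_unitary_right (n : ℕ) [NeZero n] : shiftMat n * (shiftMat n)ᴴ = 1 := by
  ext i j
  have key : ∀ x y : Fin n, (y = x + 1) = (x = y - 1) := fun x y =>
    propext ⟨fun h => by rw [h, add_sub_cancel_right], fun h => by rw [h, sub_add_cancel]⟩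
  simp [Matrix.mul_apply, shiftMat_apply, conjTranspose_apply, apply_ite (star : ℂ → ℂ),
    ite_mul, mul_ite, key, Finset.sum_ite_eq', Matrix.one_apply, sub_add_cancel, eq_comm]

lemma doppler_conj_key (n : ℕ) (m : Fin n) :
    star (Complex.exp (2 * Real.pi * Complex.I * (m : ℕ) / n)) *
      Complex.exp (2 * Real.pi * Complex.I * (m : ℕ) / n) = 1 := by
  rw [RCLike.star_def, ← Complex.exp_conj, ← Complex.exp_add]
  rw [show (starRingEnd ℂ) (2 * Real.pi * Complex.I * (m : ℕ) / n) =
      -(2 * Real.pi * Complex.I * (m : ℕ) / n) by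
    simp only [map_div₀, _root_.map_mul, Complex.conj_I, Complex.conj_ofReal,
      Complex.conj_natCast, map_ofNat]
    ring]
  rw [neg_add_cancel, Complex.exp_zero]

lemma dopplerMat_unitary_left (n : ℕ) : (dopplerMat n)ᴴ * dopplerMat n = 1 := by
  rw [dopplerMat, diagonal_conjTranspose, diagonal_mul_diagonal]
  rw [show (fun i => (star fun m : Fin n => Complex.exp (2 * Real.pi * Complex.I * (m : ℕ) / n)) i *
      Complex.exp (2 * Real.pi * Complex.I * (i : ℕ) / n)) = fun _ : Fin n => (1 : ℂ) by
    funext m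
    simpa using doppler_conj_key n m]
  exact diagonal_one

lemma dopplerMat_unitary_right (n : ℕ) : dopplerMat n * (dopplerMat n)ᴴ = 1 := by
  rw [dopplerMat, diagonal_conjTranspose, diagonal_mul_diagonal]
  rw [show (fun i : Fin n => Complex.exp (2 * Real.pi * Complex.I * (i : ℕ) / n) *
      (star fun m : Fin n => Complex.exp (2 * Real.pi * Complex.I * (m : ℕ) / n)) i)
      = fun _ : Fin n => (1 : ℂ) by
    funext m
    simpa [mul_comm] using doppler_conj_key n m]
  exact diagonal_one

lemma dftMat_mul_conjTranspose (N : ℕ) (hN : 0 < N) : dftMat N * (dftMat N)ᴴ = 1 := by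
  have hN0 : (N : ℂ) ≠ 0 := Nat.cast_ne_zero.mpr hN.ne'
  have hNR : (0:ℝ) < N := Nat.cast_pos.mpr hN
  ext j k
  have hsqrt : (Real.sqrt N : ℂ) * (Real.sqrt N : ℂ) = (N : ℂ) := by
    rw [← Complex.ofReal_mul, Real.mul_self_sqrt hNR.le]
    norm_cast
  have hterm : ∀ m : Fin N,
      dftMat N j m * star (dftMat N k m) =
        Complex.exp (2 * Real.pi * Complex.I * (((k:ℕ):ℂ) - ((j:ℕ):ℂ)) / N) ^ (m:ℕ) / N := by
    intro m
    rw [dftMat]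
    simp only [of_apply, RCLike.star_def, map_div₀, ← Complex.exp_conj, map_neg,
      _root_.map_mul, Complex.conj_I, Complex.conj_ofReal, Complex.conj_natCast, map_ofNat]
    rw [div_mul_div_comm, hsqrt, ← Complex.exp_add, ← Complex.exp_nat_mul]
    congr 2
    field_simp
    ring
  rw [Matrix.mul_apply]
  simp only [conjTranspose_apply, hterm]
  rw [← Finset.sum_div, Fin.sum_univ_eq_sum_range]
  by_cases hjk : j = k
  · subst hjk
    simp only [sub_self, mul_zero, zero_div, Complex.exp_zero, one_pow]
    simp [Finset.sum_const, Matrix.one_apply_eq, hN0]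
  · have hz1 : Complex.exp (2 * Real.pi * Complex.I * (((k:ℕ):ℂ) - ((j:ℕ):ℂ)) / N) ≠ 1 := by
      intro h
      rw [Complex.exp_eq_one_iff] at h
      obtain ⟨t, ht⟩ := h
      have h2 : (((k:ℕ):ℂ) - ((j:ℕ):ℂ)) = t * N := by
        have hpi : (2 * Real.pi * Complex.I) ≠ 0 := by
          simp [Real.pi_ne_zero, Complex.I_ne_zero]
        field_simp at ht
        calc (((k:ℕ):ℂ) - ((j:ℕ):ℂ))
            = (2 * Real.pi * Complex.I * (((k:ℕ):ℂ) - ((j:ℕ):ℂ))) / (2 * Real.pi * Complex.I) := by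
              field_simp
          _ = t * N := by rw [ht]; field_simp
      have h3 : ((k:ℕ):ℤ) - ((j:ℕ):ℤ) = t * N := by
        exact_mod_cast h2
      have hk := k.isLt; have hj := j.isLt
      have : j = k := by
        have hlt : |((k:ℕ):ℤ) - ((j:ℕ):ℤ)| < N := by
          rw [abs_lt]; omega
        rw [h3, abs_mul] at hlt
        have ht0 : t = 0 := by
          rcases eq_or_ne t 0 with h | h
          · exact h
          · exfalso
            have h1 : (1:ℤ) ≤ |t| := Int.one_le_abs h
            have hNabs : |(N:ℤ)| = N := abs_of_nonneg (by positivity)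
            nlinarith [abs_nonneg t]
        rw [ht0] at h3
        simp at h3
        exact Fin.ext (by omega)
      exact hjk this
    have hzN : Complex.exp (2 * Real.pi * Complex.I * (((k:ℕ):ℂ) - ((j:ℕ):ℂ)) / N) ^ N = 1 := by
      rw [← Complex.exp_nat_mul]
      rw [show (N:ℂ) * (2 * Real.pi * Complex.I * (((k:ℕ):ℂ) - ((j:ℕ):ℂ)) / N) =
          (((k:ℤ) - (j:ℤ) : ℤ) : ℂ) * (2 * Real.pi * Complex.I) by
        push_cast
        field_simp]
      exact Complex.exp_int_mul_two_pi_mul_I _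
    rw [geom_sum_eq hz1, hzN]
    simp [Matrix.one_apply_ne hjk]

lemma kronecker_conjTranspose {m n p q : Type*} (A : Matrix m n ℂ) (B : Matrix p q ℂ) :
    (A ⊗ₖ B)ᴴ = Aᴴ ⊗ₖ Bᴴ := by
  ext ⟨i, j⟩ ⟨i', j'⟩
  simp [conjTranspose_apply, star_mul']

lemma otfsMat_unitary_left (M N : ℕ) (hM : 0 < M) (hN : 0 < N) :
    (otfsMat M N)ᴴ * otfsMat M N = 1 := by
  rw [otfsMat, conjTranspose_reindex, kronecker_conjTranspose, conjTranspose_conjTranspose,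
    conjTranspose_one]
  rw [reindex_apply, reindex_apply, submatrix_mul_equiv, ← mul_kronecker_mul,
    dftMat_mul_conjTranspose N hN, one_mul, one_kronecker_one, submatrix_one_equiv]

/-- Left-unitarity is preserved by natural powers. -/
lemma pow_unitary_left {n : ℕ} {A : Matrix (Fin n) (Fin n) ℂ} (h : Aᴴ * A = 1) (m : ℕ) :
    (A ^ m)ᴴ * A ^ m = 1 := by
  induction m with
  | zero => simp
  | succ m ih =>
    rw [pow_succ, conjTranspose_mul, mul_assoc, ← mul_assoc ((A ^ m)ᴴ), ih, one_mul, h]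

/-- Right-unitarity is preserved by natural powers. -/
lemma pow_unitary_right {n : ℕ} {A : Matrix (Fin n) (Fin n) ℂ} (h : A * Aᴴ = 1) (m : ℕ) :
    A ^ m * (A ^ m)ᴴ = 1 := by
  induction m with
  | zero => simp
  | succ m ih =>
    rw [pow_succ, conjTranspose_mul, mul_assoc, ← mul_assoc A Aᴴ, h, one_mul, ih]

/-- Unitarity is preserved by integer powers. -/
lemma zpow_unitary_left {n : ℕ} {A : Matrix (Fin n) (Fin n) ℂ}
    (h1 : Aᴴ * A = 1) (h2 : A * Aᴴ = 1) (z : ℤ) :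
    (A ^ z)ᴴ * A ^ z = 1 := by
  cases z with
  | ofNat m => rw [Int.ofNat_eq_coe, zpow_natCast]; exact pow_unitary_left h1 m
  | negSucc m =>
    rw [zpow_negSucc]
    have hB : (A ^ (m + 1))⁻¹ = (A ^ (m + 1))ᴴ :=
      Matrix.inv_eq_right_inv (pow_unitary_right h2 (m + 1))
    rw [hB, conjTranspose_conjTranspose]
    exact pow_unitary_right h2 (m + 1)

/-- **Second moment of the delay-Doppler channel error matrix (Eq. (21)).**
With `E(ω) = (Σ_p e_p(ω)·Π^{l_p}·Δ^{k_p})·(W_Nᴴ ⊗ I_M)` for zero-mean, pairwise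
uncorrelated channel-gain errors `e_p` of variance `σₑ²`, the entrywise expectation
of `Eᴴ·E` equals `P·σₑ²·I_n`. -/
theorem dd_error_second_moment
    {Ω : Type*} [MeasurableSpace Ω] (μ : Measure Ω) [IsProbabilityMeasure μ]
    (M N P : ℕ) (hM : 0 < M) (hN : 0 < N) (hP : 0 < P)
    (l : Fin P → ℕ) (k : Fin P → ℤ)
    (e : Fin P → Ω → ℂ) (heL2 : ∀ p, MemLp (e p) 2 μ)
    (hmean : ∀ p, ∫ ω, e p ω ∂μ = 0)
    (huncorr : ∀ p q, p ≠ q → ∫ ω, e p ω * (starRingEnd ℂ) (e q ω) ∂μ = 0)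
    (σe2 : ℝ) (hσe : 0 ≤ σe2)
    (hvar : ∀ p, ∫ ω, Complex.normSq (e p ω) ∂μ = σe2)
    (E : Ω → Matrix (Fin (M * N)) (Fin (M * N)) ℂ)
    (hE : ∀ ω, E ω =
      (∑ p, e p ω • (shiftMat (M * N) ^ l p * dopplerMat (M * N) ^ k p)) * otfsMat M N) :
    ∀ m m' : Fin (M * N), ∫ ω, ((E ω)ᴴ * E ω) m m' ∂μ =
      (((P : ℝ) * σe2 : ℝ) : ℂ) • (1 : Matrix (Fin (M * N)) (Fin (M * N)) ℂ) m m' := by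
  intro m m'
  haveI : NeZero (M * N) := ⟨(Nat.mul_pos hM hN).ne'⟩
  set U : Matrix (Fin (M * N)) (Fin (M * N)) ℂ := otfsMat M N with hU
  set A : Fin P → Matrix (Fin (M * N)) (Fin (M * N)) ℂ :=
    fun p => shiftMat (M * N) ^ l p * dopplerMat (M * N) ^ k p with hA
  -- each A p is left-unitary
  have hAp : ∀ p, (A p)ᴴ * A p = 1 := by
    intro p
    rw [hA]
    dsimp only
    rw [conjTranspose_mul, mul_assoc, ← mul_assoc ((shiftMat (M * N) ^ l p)ᴴ),
      pow_unitary_left (shiftMat_unitary_left (M * N)) (l p), one_mul,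
      zpow_unitary_left (dopplerMat_unitary_left (M * N)) (dopplerMat_unitary_right (M * N)) (k p)]
  have hUU : Uᴴ * U = 1 := otfsMat_unitary_left M N hM hN
  -- the matrix identity for the integrand
  have hmat : ∀ ω, (E ω)ᴴ * E ω =
      ∑ p, ∑ q, ((starRingEnd ℂ) (e p ω) * e q ω) • (Uᴴ * ((A p)ᴴ * A q) * U) := by
    intro ω
    rw [hE ω, conjTranspose_mul, conjTranspose_sum]
    simp only [conjTranspose_smul, RCLike.star_def, Finset.mul_sum, Finset.sum_mul,
      Matrix.mul_smul, Matrix.smul_mul, smul_smul, Matrix.mul_assoc, Finset.smul_sum]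
    rw [Finset.sum_comm]
    refine Finset.sum_congr rfl fun p _ => Finset.sum_congr rfl fun q _ => ?_
    rw [mul_comm (e q ω) ((starRingEnd ℂ) (e p ω))]
    simp only [hA, Matrix.mul_assoc]
  have hintegrand : ∀ ω, ((E ω)ᴴ * E ω) m m' =
      ∑ p, ∑ q, ((starRingEnd ℂ) (e p ω) * e q ω) * (Uᴴ * ((A p)ᴴ * A q) * U) m m' := by
    intro ω
    rw [hmat ω]
    simp [Matrix.sum_apply, Matrix.smul_apply, smul_eq_mul]
  -- integrability of the products
  have hint : ∀ p q : Fin P, Integrable (fun ω => (starRingEnd ℂ) (e p ω) * e q ω) μ := by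
    intro p q
    have h1 : MemLp (fun ω => (starRingEnd ℂ) (e p ω)) 2 μ := by
      have := Complex.conjCLE.toContinuousLinearMap.comp_memLp' (heL2 p)
      exact this
    have h2 : MemLp ((fun ω => (starRingEnd ℂ) (e p ω)) • e q) 1 μ :=
      (heL2 q).smul h1 (hpqr := ⟨by rw [ENNReal.inv_two_add_inv_two, inv_one]⟩)
    have h3 : ((fun ω => (starRingEnd ℂ) (e p ω)) • e q) =
        fun ω => (starRingEnd ℂ) (e p ω) * e q ω := rfl
    rw [h3] at h2
    exact memLp_one_iff_integrable.mp h2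
  -- second moments
  have hcov : ∀ p q : Fin P,
      (∫ ω, (starRingEnd ℂ) (e p ω) * e q ω ∂μ) = if p = q then ((σe2 : ℝ) : ℂ) else 0 := by
    intro p q
    by_cases h : p = q
    · subst h
      rw [if_pos rfl]
      have key : ∀ ω, (starRingEnd ℂ) (e p ω) * e p ω =
          ((Complex.normSq (e p ω) : ℝ) : ℂ) := by
        intro ω
        rw [Complex.normSq_eq_conj_mul_self]
      simp_rw [key]
      rw [← hvar p]
      exact integral_ofReal
    · rw [if_neg h]
      have key : ∀ ω, (starRingEnd ℂ) (e p ω) * e q ω =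
          (starRingEnd ℂ) (e p ω * (starRingEnd ℂ) (e q ω)) := by
        intro ω
        simp [_root_.map_mul, Complex.conj_conj]
      simp_rw [key]
      rw [integral_conj, huncorr p q h, map_zero]
  -- compute the integral
  calc ∫ ω, ((E ω)ᴴ * E ω) m m' ∂μ
      = ∫ ω, ∑ p, ∑ q, ((starRingEnd ℂ) (e p ω) * e q ω) * (Uᴴ * ((A p)ᴴ * A q) * U) m m' ∂μ := by
        simp_rw [hintegrand]
    _ = ∑ p, ∑ q, (∫ ω, (starRingEnd ℂ) (e p ω) * e q ω ∂μ) * (Uᴴ * ((A p)ᴴ * A q) * U) m m' := by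
        rw [integral_finset_sum _ (fun p _ => integrable_finset_sum _
          (fun q _ => (hint p q).mul_const _))]
        refine Finset.sum_congr rfl fun p _ => ?_
        rw [integral_finset_sum _ (fun q _ => (hint p q).mul_const _)]
        exact Finset.sum_congr rfl fun q _ => integral_mul_const _ _
    _ = ∑ p, ∑ q, (if p = q then ((σe2 : ℝ) : ℂ) else 0) * (Uᴴ * ((A p)ᴴ * A q) * U) m m' := by
        simp_rw [hcov]
    _ = ∑ p : Fin P, ((σe2 : ℝ) : ℂ) * (Uᴴ * ((A p)ᴴ * A p) * U) m m' := by
        refine Finset.sum_congr rfl fun p _ => ?_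
        rw [Finset.sum_eq_single p]
        · rw [if_pos rfl]
        · intro q _ hq
          rw [if_neg (Ne.symm hq), zero_mul]
        · intro habs
          exact absurd (Finset.mem_univ p) habs
    _ = ∑ p : Fin P, ((σe2 : ℝ) : ℂ) * (1 : Matrix (Fin (M * N)) (Fin (M * N)) ℂ) m m' := by
        refine Finset.sum_congr rfl fun p _ => ?_
        rw [hAp p, Matrix.mul_one, hUU]
    _ = (((P : ℝ) * σe2 : ℝ) : ℂ) • (1 : Matrix (Fin (M * N)) (Fin (M * N)) ℂ) m m' := by
        rw [Finset.sum_const, Finset.card_univ, Fintype.card_fin]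
        simp only [nsmul_eq_mul, smul_eq_mul]
        push_cast
        ring
end
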